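/- arXiv:2401.05743 — 5 statements merged into one kernel-verified Lean document; each statement's English description precedes it below -/
import Mathlib

section
/- With linear constraints as above (each head condition monotone in the database), every finite database D has a unique repair with respect to the induced consistency predicate. -/
def IsRepair {F : Type} (C : Set F → Prop) (D : Finset F) (R : Set F) : Prop :=
  R ⊆ ↑D ∧ C R ∧ ∀ R' : Set F, R ⊆ R' → R' ⊆ ↑D → C R' → R' = R

def WeaklyConsistent {F : Type} (C : Set F → Prop) (D : Finset F) (X : Set F) : Prop :=
  ∃ X' : Set F, X ⊆ X' ∧ X' ⊆ ↑D ∧ C X'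

def Satisfies {F : Type} (S : Set ((F → Prop) × (F → Set F → Prop))) (X : Set F) : Prop :=
  ∀ c ∈ S, ∀ α ∈ X, c.1 α → c.2 α X

theorem stmt_8 {F : Type} (S : Set ((F → Prop) × (F → Set F → Prop)))
    (hmono : ∀ c ∈ S, ∀ (α : F) (X Y : Set F), X ⊆ Y → c.2 α X → c.2 α Y)
    (D : Finset F) :
    ∃! R : Set F, IsRepair (Satisfies S) D R := by
  set R : Set F := ⋃₀ {X : Set F | X ⊆ ↑D ∧ Satisfies S X} with hR
  have hRD : R ⊆ ↑D := by
    intro x hx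
    obtain ⟨X, ⟨hXD, _⟩, hxX⟩ := hx
    exact hXD hxX
  have hRsat : Satisfies S R := by
    intro c hc α hα hb
    obtain ⟨X, ⟨hXD, hXsat⟩, hαX⟩ := hα
    exact hmono c hc α X R (fun y hy => ⟨X, ⟨hXD, hXsat⟩, hy⟩) (hXsat c hc α hαX hb)
  have hmax : ∀ R' : Set F, R ⊆ R' → R' ⊆ ↑D → Satisfies S R' → R' = R := by
    intro R' _ hR'D hR'sat
    exact Set.Subset.antisymm (fun x hx => ⟨R', ⟨hR'D, hR'sat⟩, hx⟩) ‹R ⊆ R'›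
  refine ⟨R, ⟨hRD, hRsat, hmax⟩, ?_⟩
  rintro R₁ ⟨h1D, h1sat, h1max⟩
  have hsub : R₁ ⊆ R := fun x hx => ⟨R₁, ⟨h1D, h1sat⟩, hx⟩
  exact (h1max R hsub hRD hRsat).symm
end

section
/- Suppose the query Q has the 'image property': there is a family I of finite sets ('images') such that for every set X, Q X holds iff some M ∈ I satisfies M ⊆ X. Then Q is IAR-entailed by D if and only if there exists M ∈ I with M ⊆ D such that M is contained in every repair of D. -/
lemma repair_exists {F : Type} (D : Finset F) (C : Set F → Prop) (hC : C ∅) :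
    ∃ R, IsRepair C D R := by
  classical
  have hne : ({X ∈ D.powerset | C ↑X} : Finset (Finset F)).Nonempty := by
    refine ⟨∅, ?_⟩
    simp [hC]
  obtain ⟨X, hX, hmax⟩ := Finset.exists_max_image _ Finset.card hne
  simp only [Finset.mem_filter, Finset.mem_powerset] at hX
  refine ⟨↑X, by exact_mod_cast Finset.coe_subset.mpr hX.1, hX.2, ?_⟩
  intro R' hsub hsubD hCR'
  have hfin : R'.Finite := (D.finite_toSet).subset hsubD
  have hX' : hfin.toFinset ⊆ D := by
    intro a ha; exact_mod_cast hsubD (hfin.mem_toFinset.mp ha)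
  have hmem : hfin.toFinset ∈ ({X ∈ D.powerset | C ↑X} : Finset (Finset F)) := by
    simp only [Finset.mem_filter, Finset.mem_powerset]
    exact ⟨hX', by simpa using hCR'⟩
  have hXsub : X ⊆ hfin.toFinset := by
    intro a ha
    exact hfin.mem_toFinset.mpr (hsub (by exact_mod_cast ha))
  have hcard := hmax _ hmem
  calc R' = ↑hfin.toFinset := by simp
    _ = ↑X := by rw [Finset.eq_of_subset_of_card_le hXsub hcard]

theorem stmt_12 {F : Type} (D : Finset F) (C : Set F → Prop) (hC : C ∅)
    (Q : Set F → Prop) (I : Set (Finset F))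
    (hQ : ∀ X : Set F, Q X ↔ ∃ M ∈ I, ↑M ⊆ X) :
    Q (⋂₀ {R : Set F | IsRepair C D R}) ↔
      ∃ M ∈ I, ↑M ⊆ (↑D : Set F) ∧ ∀ R : Set F, IsRepair C D R → ↑M ⊆ R := by
  obtain ⟨R₀, hR₀⟩ := repair_exists D C hC
  rw [hQ]
  constructor
  · rintro ⟨M, hM, hsub⟩
    refine ⟨M, hM, ?_, ?_⟩
    · exact (hsub.trans (Set.sInter_subset_of_mem hR₀)).trans hR₀.1
    · intro R hR
      exact hsub.trans (Set.sInter_subset_of_mem hR)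
  · rintro ⟨M, hM, _, hall⟩
    exact ⟨M, hM, Set.subset_sInter fun R hR => hall R hR⟩
end

section
/- Assume the consistency predicate is closed under binary unions of subsets of D and C ∅ holds, and Q has the image property with image family I. Then Q is AR-entailed (equivalently IAR-entailed) by D if and only if there exists M ∈ I with ↑M ⊆ D such that for every α ∈ M the singleton {α} is weakly consistent with D. -/
/-!
Because `D` is finite and consistency is closed under unions, the union of all consistent
subsets of `D` is itself consistent, so it is the unique repair. Hence `Q` is entailed iff
some image lies inside this greatest consistent subset, and a fact lies in it exactly when
it is weakly consistent.
-/

def UnionClosedWithin {F : Type} (C : Set F → Prop) (D : Finset F) : Prop :=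
  ∀ D₁ D₂ : Set F, D₁ ⊆ ↑D → D₂ ⊆ ↑D → C D₁ → C D₂ → C (D₁ ∪ D₂)

def maxConsistent {F : Type} (C : Set F → Prop) (D : Finset F) : Set F :=
  ⋃₀ {X | X ⊆ ↑D ∧ C X}

section

variable {F : Type} {C : Set F → Prop} {D : Finset F}

theorem maxConsistent_subset : maxConsistent C D ⊆ ↑D :=
  Set.sUnion_subset fun _ hX => hX.1

theorem subset_maxConsistent {X : Set F} (hXD : X ⊆ ↑D) (hX : C X) : X ⊆ maxConsistent C D :=
  Set.subset_sUnion_of_mem ⟨hXD, hX⟩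

theorem UnionClosedWithin.sUnion (hunion : UnionClosedWithin C D) (hC : C ∅)
    {T : Set (Set F)} (hT : T.Finite) (hmem : ∀ X ∈ T, X ⊆ ↑D ∧ C X) : C (⋃₀ T) := by
  refine (Set.Finite.induction_on_subset
    (motive := fun s _ => ⋃₀ s ⊆ ↑D ∧ C (⋃₀ s)) T hT ⟨by simp, by simpa using hC⟩ ?_).2
  rintro X s hXT - - ⟨hsD, hs⟩
  obtain ⟨hXD, hX⟩ := hmem X hXT
  rw [Set.sUnion_insert]
  exact ⟨Set.union_subset hXD hsD, hunion _ _ hXD hsD hX hs⟩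

theorem consistent_maxConsistent (hunion : UnionClosedWithin C D) (hC : C ∅) :
    C (maxConsistent C D) :=
  hunion.sUnion hC (D.finite_toSet.finite_subsets.subset fun _ hX => hX.1) fun _ hX => hX

theorem isRepair_iff_eq_maxConsistent (hunion : UnionClosedWithin C D) (hC : C ∅) {R : Set F} :
    IsRepair C D R ↔ R = maxConsistent C D := by
  constructor
  · rintro ⟨hRD, hR, hmax⟩
    exact (hmax _ (subset_maxConsistent hRD hR) maxConsistent_subset
      (consistent_maxConsistent hunion hC)).symm
  · rintro rfl
    exact ⟨maxConsistent_subset, consistent_maxConsistent hunion hC,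
      fun R' hR' hR'D hCR' => (subset_maxConsistent hR'D hCR').antisymm hR'⟩

theorem weaklyConsistent_singleton_iff (hunion : UnionClosedWithin C D) (hC : C ∅) {α : F} :
    WeaklyConsistent C D {α} ↔ α ∈ maxConsistent C D := by
  constructor
  · rintro ⟨X, hαX, hXD, hX⟩
    exact subset_maxConsistent hXD hX (hαX rfl)
  · intro hα
    exact ⟨_, Set.singleton_subset_iff.mpr hα, maxConsistent_subset,
      consistent_maxConsistent hunion hC⟩

end

theorem stmt_13 {F : Type} (D : Finset F) (C : Set F → Prop) (hC : C ∅)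
    (hunion : ∀ D₁ D₂ : Set F, D₁ ⊆ ↑D → D₂ ⊆ ↑D → C D₁ → C D₂ → C (D₁ ∪ D₂))
    (Q : Set F → Prop) (I : Set (Finset F))
    (hQ : ∀ X : Set F, Q X ↔ ∃ M ∈ I, ↑M ⊆ X) :
    (∀ R : Set F, IsRepair C D R → Q R) ↔
      ∃ M ∈ I, ↑M ⊆ (↑D : Set F) ∧ ∀ α ∈ M, WeaklyConsistent C D {α} := by
  simp only [isRepair_iff_eq_maxConsistent hunion hC, forall_eq, hQ,
    weaklyConsistent_singleton_iff hunion hC]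
  refine exists_congr fun M => and_congr_right fun _ => ⟨fun hM => ?_, fun hM => hM.2⟩
  exact ⟨hM.trans maxConsistent_subset, fun _ hα => hM hα⟩
end

section
/- With cl a closure operator and consistency defined as cl X = X, a subset D' of a finite database D is a repair of D if and only if cl D' ⊆ D and for every fact α ∈ D \ D' it holds that cl (D' ∪ {α}) ⊄ D (i.e., cl (D' ∪ {α}) is not a subset of D). -/
theorem stmt_15 {F : Type} (D : Finset F) (cl : Set F → Set F)
    (hext : ∀ X : Set F, X ⊆ cl X)
    (hmono : ∀ X Y : Set F, X ⊆ Y → cl X ⊆ cl Y)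
    (hidem : ∀ X : Set F, cl (cl X) = cl X)
    (D' : Set F) (hsub : D' ⊆ ↑D) :
    IsRepair (fun X => cl X = X) D D' ↔
      cl D' ⊆ ↑D ∧ ∀ α ∈ (↑D : Set F) \ D', ¬ cl (D' ∪ {α}) ⊆ ↑D := by
  constructor
  · rintro ⟨hR, hC, hmax⟩
    refine ⟨by rw [hC]; exact hR, ?_⟩
    rintro α ⟨hαD, hαD'⟩ hcon
    have h1 : D' ⊆ cl (D' ∪ {α}) :=
      (Set.subset_union_left).trans (hext _)
    have := hmax _ h1 hcon (hidem _)
    exact hαD' (this ▸ (hext (D' ∪ {α}) (Set.mem_union_right _ rfl)))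
  · rintro ⟨hclD, hcond⟩
    have hC : cl D' = D' := by
      by_contra h
      obtain ⟨α, hα, hαD'⟩ := Set.not_subset.1 fun hs => h ((hs.antisymm (hext _)))
      refine hcond α ⟨hclD hα, hαD'⟩ ?_
      have : cl (D' ∪ {α}) ⊆ cl (cl D') :=
        hmono _ _ (Set.union_subset (hext _) (by simpa using hα))
      exact this.trans ((hidem D').subset.trans hclD)
    refine ⟨hsub, hC, fun R' hle hRD hRC => ?_⟩
    by_contra h
    obtain ⟨α, hα, hαD'⟩ := Set.not_subset.1 fun hs => h (hs.antisymm hle)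
    refine hcond α ⟨hRD hα, hαD'⟩ ?_
    have : cl (D' ∪ {α}) ⊆ cl R' :=
      hmono _ _ (Set.union_subset hle (by simpa using hα))
    rw [hRC] at this; exact this.trans hRD
end

section
/- A query Q is not AR-entailed by D if and only if there exists a consistent subset D' of D such that for every consistent D'' with D' ⊆ D'' ⊆ D, Q D'' does not hold — provided Q is antitone-invariant in the following sense: Q is monotone. Precisely: for a monotone query Q, Q is not AR-entailed by D iff there exists a consistent D' ⊆ D such that no consistent superset D'' of D' within D satisfies Q. -/
/-! A repair failing `Q` is itself a witness `D'`, since its only consistent extension inside `D`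
is itself. Conversely, as `D` is finite, a witness `D'` extends to a maximal consistent subset of
`D`, i.e. a repair, and that repair fails `Q`. -/

theorem exists_isRepair_superset {F : Type} {C : Set F → Prop} {D : Finset F} {D' : Set F}
    (hD' : D' ⊆ ↑D) (hC : C D') : ∃ R : Set F, IsRepair C D R ∧ D' ⊆ R := by
  have hfin : {X : Set F | D' ⊆ X ∧ X ⊆ ↑D ∧ C X}.Finite :=
    D.finite_toSet.finite_subsets.subset fun _ hX => hX.2.1
  obtain ⟨R, hR, hmax⟩ := hfin.exists_maximal ⟨D', subset_rfl, hD', hC⟩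
  obtain ⟨hD'R, hRD, hCR⟩ : D' ⊆ R ∧ R ⊆ ↑D ∧ C R := hR
  refine ⟨R, ⟨hRD, hCR, fun X hRX hXD hCX => ?_⟩, hD'R⟩
  exact (hmax ⟨hD'R.trans hRX, hXD, hCX⟩ hRX).antisymm hRX

theorem stmt_19_general {F : Type} (D : Finset F) (C : Set F → Prop)
    (Q : Set F → Prop) :
    (¬ ∀ R : Set F, IsRepair C D R → Q R) ↔
      ∃ D' : Set F, D' ⊆ ↑D ∧ C D' ∧
        ∀ D'' : Set F, D' ⊆ D'' → D'' ⊆ ↑D → C D'' → ¬ Q D'' := by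
  push Not
  constructor
  · rintro ⟨R, ⟨hRD, hCR, hmax⟩, hnQ⟩
    exact ⟨R, hRD, hCR, fun X hRX hXD hCX => hmax X hRX hXD hCX ▸ hnQ⟩
  · rintro ⟨D', hD', hCD', hnQ⟩
    obtain ⟨R, hR, hD'R⟩ := exists_isRepair_superset hD' hCD'
    exact ⟨R, hR, hnQ R hD'R hR.1 hR.2.1⟩

theorem stmt_19 {F : Type} (D : Finset F) (C : Set F → Prop) (hC : C ∅)
    (Q : Set F → Prop) (hmono : ∀ X Y : Set F, X ⊆ Y → Q X → Q Y) :
    (¬ ∀ R : Set F, IsRepair C D R → Q R) ↔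
      ∃ D' : Set F, D' ⊆ ↑D ∧ C D' ∧
        ∀ D'' : Set F, D' ⊆ D'' → D'' ⊆ ↑D → C D'' → ¬ Q D'' :=
  stmt_19_general D C Q
end
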